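/- Let T be a finite list of tuples in ℤ^m, let B ⊆ {1,…,m} be a set of selected dimensions with range constraints {(r_{j,l}, r_{j,u})}_{j ∈ B} and a preference function assigning 'min' or 'max' to each j ∈ B, and let R' be the extended region assigning to each i ∈ B the bounds (r_{i,l}, r_{i,u}) and to each i ∉ B bounds (L_i, U_i) satisfied by every tuple of T. Let π be any permutation of the index set of T, let C̃ be the sublist of the permuted list consisting of tuples within R', and let S be the output of the randomized fetch algorithm on C̃ with respect to the dominance relation ≺_B, for any choice of the masking bits. Then {t : (t, 0) ∈ S} = {p ∈ C : there is no p' ∈ C with p' ≺_B p}, where C = {t ∈ T : r_{j,l} ≤ t[j] ≤ r_{j,u} for all j ∈ B}; that is, the end-to-end pipeline of shuffling, region filtering, randomized skyline fetching, and filtering by isDomi = 0 returns exactly the user-defined skyline query result of Definition 3. -/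

import Mathlib

/-- `a` dominates `b` on the selected dimension set `B` as per the preference
function `pref` (`pref j = false` means min is preferred on dimension `j`,
`pref j = true` means max is preferred). -/
def Dominates (m : ℕ) (B : Finset (Fin m)) (pref : Fin m → Bool)
    (a b : Fin m → ℤ) : Prop :=
  (∀ j ∈ B, ((pref j = false → a j ≤ b j) ∧ (pref j = true → b j ≤ a j))) ∧
    ∃ j ∈ B, a j ≠ b j

instance (m : ℕ) (B : Finset (Fin m)) (pref : Fin m → Bool) :
    DecidableRel (Dominates m B pref) := fun a b => by
  unfold Dominates; infer_instance

/-- Scan of the current window during the processing of tuple `t` in the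
randomized fetch algorithm: `mask` is the stream of arbitrary masking bits
(one consumed per comparison, indexed by the counter), and the accumulator
collects the OR of the dominance flags `Φ₁`; a tuple is discarded when the
masked flag `Φ₁ ∧ r` is `1`, and window members dominated by `t` are removed.
Returns `(new window, discarded?, isDomi accumulator, new counter)`. -/
def obliScan {τ : Type*} (r : τ → τ → Prop) [DecidableRel r]
    (mask : ℕ → Bool) (t : τ) :
    List (τ × Bool) → ℕ → Bool → List (τ × Bool) × Bool × Bool × ℕ
  | [], k, acc => ([], false, acc, k)
  | (x, b) :: rest, k, acc =>
    let Φ₁ : Bool := decide (r x t)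
    if Φ₁ && mask k then ((x, b) :: rest, true, acc || Φ₁, k + 1)
    else
      let res := obliScan r mask t rest (k + 1) (acc || Φ₁)
      if decide (r t x) then res
      else ((x, b) :: res.1, res.2.1, res.2.2.1, res.2.2.2)

/-- Main loop of the randomized fetch algorithm. -/
def obliFetchGo {τ : Type*} (r : τ → τ → Prop) [DecidableRel r]
    (mask : ℕ → Bool) :
    List τ → List (τ × Bool) → ℕ → List (τ × Bool)
  | [], S, _ => S
  | t :: rest, S, k =>
    let res := obliScan r mask t S k false
    if res.2.1 then obliFetchGo r mask rest res.1 res.2.2.2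
    else obliFetchGo r mask rest (res.1 ++ [(t, res.2.2.1)]) res.2.2.2

/-- The randomized fetch algorithm `ObliFetch`. -/
def obliFetch {τ : Type*} (r : τ → τ → Prop) [DecidableRel r]
    (mask : ℕ → Bool) : List τ → List (τ × Bool)
  | [] => []
  | t :: rest => obliFetchGo r mask rest [(t, false)] 0

section Aux
variable {τ : Type*} {r : τ → τ → Prop} [DecidableRel r] {mask : ℕ → Bool} {t : τ}

lemma obliScan_cons (x : τ) (b : Bool) (rest : List (τ × Bool)) (k : ℕ) (acc : Bool) :
    obliScan r mask t ((x, b) :: rest) k acc =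
      if decide (r x t) && mask k then ((x, b) :: rest, true, acc || decide (r x t), k + 1)
      else
        if decide (r t x) then obliScan r mask t rest (k + 1) (acc || decide (r x t))
        else ((x, b) :: (obliScan r mask t rest (k + 1) (acc || decide (r x t))).1,
          (obliScan r mask t rest (k + 1) (acc || decide (r x t))).2.1,
          (obliScan r mask t rest (k + 1) (acc || decide (r x t))).2.2.1,
          (obliScan r mask t rest (k + 1) (acc || decide (r x t))).2.2.2) := rfl

lemma scan_mem : ∀ (S : List (τ × Bool)) (k : ℕ) (acc : Bool) (p : τ × Bool),
    p ∈ (obliScan r mask t S k acc).1 → p ∈ S := by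
  intro S
  induction S with
  | nil => intro k acc p hp; simp [obliScan] at hp
  | cons q rest ih =>
    obtain ⟨x, b⟩ := q
    intro k acc p hp
    by_cases hc1 : (decide (r x t) && mask k) = true
    · rw [obliScan_cons, if_pos hc1] at hp
      exact hp
    · by_cases hc2 : decide (r t x) = true
      · rw [obliScan_cons, if_neg hc1, if_pos hc2] at hp
        exact List.mem_cons_of_mem _ (ih _ _ _ hp)
      · rw [obliScan_cons, if_neg hc1, if_neg hc2] at hp
        rcases List.mem_cons.mp hp with h | h
        · exact h ▸ List.mem_cons_self
        · exact List.mem_cons_of_mem _ (ih _ _ _ h)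

lemma scan_keep : ∀ (S : List (τ × Bool)) (k : ℕ) (acc : Bool) (p : τ × Bool),
    p ∈ S → ¬ r t p.1 → p ∈ (obliScan r mask t S k acc).1 := by
  intro S
  induction S with
  | nil => intro k acc p hp; simp at hp
  | cons q rest ih =>
    obtain ⟨x, b⟩ := q
    intro k acc p hp hnr
    by_cases hc1 : (decide (r x t) && mask k) = true
    · rw [obliScan_cons, if_pos hc1]; exact hp
    · by_cases hc2 : decide (r t x) = true
      · rw [obliScan_cons, if_neg hc1, if_pos hc2]
        rcases List.mem_cons.mp hp with h' | h'
        · subst h'; exact absurd (of_decide_eq_true hc2) hnr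
        · exact ih _ _ _ h' hnr
      · rw [obliScan_cons, if_neg hc1, if_neg hc2]
        rcases List.mem_cons.mp hp with h' | h'
        · exact h' ▸ List.mem_cons_self
        · exact List.mem_cons_of_mem _ (ih _ _ _ h' hnr)

lemma scan_removed (S : List (τ × Bool)) (k : ℕ) (acc : Bool) (p : τ × Bool)
    (hp : p ∈ S) (hnp : p ∉ (obliScan r mask t S k acc).1) : r t p.1 := by
  by_contra h
  exact hnp (scan_keep S k acc p hp h)

lemma scan_disc : ∀ (S : List (τ × Bool)) (k : ℕ) (acc : Bool),
    (obliScan r mask t S k acc).2.1 = true →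
    ∃ p ∈ (obliScan r mask t S k acc).1, r p.1 t := by
  intro S
  induction S with
  | nil => intro k acc h; simp [obliScan] at h
  | cons q rest ih =>
    obtain ⟨x, b⟩ := q
    intro k acc h
    by_cases hc1 : (decide (r x t) && mask k) = true
    · rw [obliScan_cons, if_pos hc1]
      refine ⟨(x, b), List.mem_cons_self, ?_⟩
      simp only [Bool.and_eq_true, decide_eq_true_eq] at hc1
      exact hc1.1
    · by_cases hc2 : decide (r t x) = true
      · rw [obliScan_cons, if_neg hc1, if_pos hc2] at h ⊢
        exact ih _ _ h
      · rw [obliScan_cons, if_neg hc1, if_neg hc2] at h ⊢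
        obtain ⟨p, hp1, hp2⟩ := ih _ _ h
        exact ⟨p, List.mem_cons_of_mem _ hp1, hp2⟩

lemma scan_kept_not : ∀ (S : List (τ × Bool)) (k : ℕ) (acc : Bool) (p : τ × Bool),
    (obliScan r mask t S k acc).2.1 = false →
    p ∈ (obliScan r mask t S k acc).1 → ¬ r t p.1 := by
  intro S
  induction S with
  | nil => intro k acc p _ hp; simp [obliScan] at hp
  | cons q rest ih =>
    obtain ⟨x, b⟩ := q
    intro k acc p hd hp
    by_cases hc1 : (decide (r x t) && mask k) = true
    · rw [obliScan_cons, if_pos hc1] at hd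
      simp at hd
    · by_cases hc2 : decide (r t x) = true
      · rw [obliScan_cons, if_neg hc1, if_pos hc2] at hd hp
        exact ih _ _ _ hd hp
      · rw [obliScan_cons, if_neg hc1, if_neg hc2] at hd hp
        rcases List.mem_cons.mp hp with h' | h'
        · simp only [decide_eq_true_eq] at hc2
          exact h' ▸ hc2
        · exact ih _ _ _ hd h'

lemma scan_acc_mono : ∀ (S : List (τ × Bool)) (k : ℕ),
    (obliScan r mask t S k true).2.2.1 = true := by
  intro S
  induction S with
  | nil => intro k; simp [obliScan]
  | cons q rest ih =>
    obtain ⟨x, b⟩ := q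
    intro k
    by_cases hc1 : (decide (r x t) && mask k) = true
    · rw [obliScan_cons, if_pos hc1]; simp
    · by_cases hc2 : decide (r t x) = true
      · rw [obliScan_cons, if_neg hc1, if_pos hc2, Bool.true_or]
        exact ih (k + 1)
      · rw [obliScan_cons, if_neg hc1, if_neg hc2]
        simpa using ih (k + 1)

lemma scan_acc_true : ∀ (S : List (τ × Bool)) (k : ℕ) (acc : Bool) (p : τ × Bool),
    p ∈ S → r p.1 t →
    (obliScan r mask t S k acc).2.1 = false →
    (obliScan r mask t S k acc).2.2.1 = true := by
  intro S
  induction S with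
  | nil => intro k acc p hp; simp at hp
  | cons q rest ih =>
    obtain ⟨x, b⟩ := q
    intro k acc p hp hr hd
    by_cases hc1 : (decide (r x t) && mask k) = true
    · rw [obliScan_cons, if_pos hc1] at hd
      simp at hd
    · by_cases hc2 : decide (r t x) = true
      · rw [obliScan_cons, if_neg hc1, if_pos hc2] at hd ⊢
        rcases List.mem_cons.mp hp with h' | h'
        · have hx : decide (r x t) = true := decide_eq_true_eq.mpr (by subst h'; exact hr)
          rw [hx, Bool.or_true]
          exact scan_acc_mono rest (k + 1)
        · exact ih _ _ _ h' hr hd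
      · rw [obliScan_cons, if_neg hc1, if_neg hc2] at hd ⊢
        rcases List.mem_cons.mp hp with h' | h'
        · have hx : decide (r x t) = true := decide_eq_true_eq.mpr (by subst h'; exact hr)
          rw [hx, Bool.or_true]
          exact scan_acc_mono rest (k + 1)
        · exact ih _ _ _ h' hr hd

lemma scan_nodom : ∀ (S : List (τ × Bool)) (k : ℕ) (acc : Bool),
    (∀ p ∈ S, ¬ r p.1 t) →
    (obliScan r mask t S k acc).2.1 = false ∧ (obliScan r mask t S k acc).2.2.1 = acc := by
  intro S
  induction S with
  | nil => intro k acc _; simp [obliScan]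
  | cons q rest ih =>
    obtain ⟨x, b⟩ := q
    intro k acc hnd
    have hx : decide (r x t) = false := by
      simp only [decide_eq_false_iff_not]
      exact hnd (x, b) (List.mem_cons_self)
    have hc1 : ¬ ((decide (r x t) && mask k) = true) := by simp [hx]
    have ihr := ih (k + 1) acc (fun p hp => hnd p (List.mem_cons_of_mem _ hp))
    by_cases hc2 : decide (r t x) = true
    · rw [obliScan_cons, if_neg hc1, if_pos hc2, hx, Bool.or_false]
      exact ihr
    · rw [obliScan_cons, if_neg hc1, if_neg hc2, hx, Bool.or_false]
      exact ihr

end Aux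

section Inv
variable {τ : Type*} (r : τ → τ → Prop) [DecidableRel r]

/-- The loop invariant of the randomized fetch algorithm. -/
def SkyInv (P : List τ) (S : List (τ × Bool)) : Prop :=
  (∀ p ∈ S, p.1 ∈ P) ∧
  (∀ x ∈ P, (∀ y ∈ P, ¬ r y x) → (x, false) ∈ S) ∧
  (∀ x : τ, (x, false) ∈ S → ∀ y ∈ P, ¬ r y x) ∧
  (∀ y ∈ P, ∃ p ∈ S, p.1 = y ∨ r p.1 y)

variable {r}
variable (hirr : ∀ a, ¬ r a a) (htrans : ∀ a b c, r a b → r b c → r a c)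
variable {mask : ℕ → Bool}

include hirr htrans in
lemma skyInv_step (P : List τ) (S : List (τ × Bool)) (t : τ) (k : ℕ)
    (h : SkyInv r P S) :
    SkyInv r (P ++ [t])
      (if (obliScan r mask t S k false).2.1 then (obliScan r mask t S k false).1
       else (obliScan r mask t S k false).1 ++ [(t, (obliScan r mask t S k false).2.2.1)]) := by
  obtain ⟨ha, hb, hc, hd⟩ := h
  set res := obliScan r mask t S k false with hres
  have hmem : ∀ p ∈ res.1, p ∈ S := fun p hp => scan_mem S k false p hp
  by_cases hdisc : res.2.1 = true
  · rw [if_pos hdisc]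
    obtain ⟨w, hw1, hw2⟩ := scan_disc S k false hdisc
    have hwP : w.1 ∈ P := ha w (hmem w hw1)
    refine ⟨?_, ?_, ?_, ?_⟩
    · intro p hp
      exact List.mem_append_left _ (ha p (hmem p hp))
    · intro x hx hnd
      rcases List.mem_append.mp hx with hx | hx
      · have h1 : (x, false) ∈ S := hb x hx (fun y hy => hnd y (List.mem_append_left _ hy))
        have h2 : ¬ r t x := hnd t (List.mem_append_right _ (List.mem_singleton_self t))
        exact scan_keep S k false (x, false) h1 h2
      · rw [List.mem_singleton.mp hx]
        exact absurd hw2 ((List.mem_singleton.mp hx ▸ hnd) w.1 (List.mem_append_left _ hwP))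
    · intro x hx y hy hryx
      have hxS : (x, false) ∈ S := hmem _ hx
      rcases List.mem_append.mp hy with hy | hy
      · exact hc x hxS y hy hryx
      · rw [List.mem_singleton.mp hy] at hryx
        exact hc x hxS w.1 hwP (htrans _ _ _ hw2 hryx)
    · intro y hy
      rcases List.mem_append.mp hy with hy | hy
      · obtain ⟨p, hp1, hp2⟩ := hd y hy
        by_cases hpk : p ∈ res.1
        · exact ⟨p, hpk, hp2⟩
        · have hrtp : r t p.1 := scan_removed S k false p hp1 hpk
          refine ⟨w, hw1, Or.inr ?_⟩
          rcases hp2 with h' | h'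
          · exact h' ▸ htrans _ _ _ hw2 hrtp
          · exact htrans _ _ _ (htrans _ _ _ hw2 hrtp) h'
      · rw [List.mem_singleton.mp hy]
        exact ⟨w, hw1, Or.inr hw2⟩
  · rw [if_neg hdisc]
    rw [Bool.not_eq_true] at hdisc
    refine ⟨?_, ?_, ?_, ?_⟩
    · intro p hp
      rcases List.mem_append.mp hp with hp | hp
      · exact List.mem_append_left _ (ha p (hmem p hp))
      · rw [List.mem_singleton.mp hp]
        exact List.mem_append_right _ (List.mem_singleton_self t)
    · intro x hx hnd
      rcases List.mem_append.mp hx with hx | hx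
      · have h1 : (x, false) ∈ S := hb x hx (fun y hy => hnd y (List.mem_append_left _ hy))
        have h2 : ¬ r t x := hnd t (List.mem_append_right _ (List.mem_singleton_self t))
        exact List.mem_append_left _ (scan_keep S k false (x, false) h1 h2)
      · rw [List.mem_singleton.mp hx]
        have hno : ∀ p ∈ S, ¬ r p.1 t := by
          intro p hp
          exact (List.mem_singleton.mp hx ▸ hnd) p.1 (List.mem_append_left _ (ha p hp))
        have hacc : res.2.2.1 = false := (scan_nodom S k false hno).2
        rw [hacc]
        exact List.mem_append_right _ (List.mem_singleton_self _)
    · intro x hx y hy hryx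
      rcases List.mem_append.mp hx with hx | hx
      · have hxS : (x, false) ∈ S := hmem _ hx
        rcases List.mem_append.mp hy with hy | hy
        · exact hc x hxS y hy hryx
        · rw [List.mem_singleton.mp hy] at hryx
          exact scan_kept_not S k false (x, false) hdisc hx hryx
      · -- x = t with res.2.2.1 = false
        have hxt : x = t ∧ res.2.2.1 = false := by
          have := List.mem_singleton.mp hx
          exact ⟨congrArg Prod.fst this, (congrArg Prod.snd this).symm⟩
        rcases List.mem_append.mp hy with hy | hy
        · -- y ∈ P dominates t: find window witness
          obtain ⟨p, hp1, hp2⟩ := hd y hy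
          have hryt : r y t := hxt.1 ▸ hryx
          have hpt : r p.1 t := by
            rcases hp2 with h' | h'
            · exact h' ▸ hryt
            · exact htrans _ _ _ h' hryt
          have := scan_acc_true S k false p hp1 hpt hdisc
          rw [hxt.2] at this
          exact absurd this (by simp)
        · rw [List.mem_singleton.mp hy] at hryx
          exact hirr _ (hxt.1 ▸ hryx)
    · intro y hy
      rcases List.mem_append.mp hy with hy | hy
      · obtain ⟨p, hp1, hp2⟩ := hd y hy
        by_cases hpk : p ∈ res.1
        · exact ⟨p, List.mem_append_left _ hpk, hp2⟩
        · have hrtp : r t p.1 := scan_removed S k false p hp1 hpk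
          refine ⟨(t, res.2.2.1), List.mem_append_right _ (List.mem_singleton_self _), Or.inr ?_⟩
          rcases hp2 with h' | h'
          · exact h' ▸ hrtp
          · exact htrans _ _ _ hrtp h'
      · rw [List.mem_singleton.mp hy]
        exact ⟨(t, res.2.2.1), List.mem_append_right _ (List.mem_singleton_self _), Or.inl rfl⟩

end Inv

section Loop
variable {τ : Type*} {r : τ → τ → Prop} [DecidableRel r] {mask : ℕ → Bool}
variable (hirr : ∀ a, ¬ r a a) (htrans : ∀ a b c, r a b → r b c → r a c)

include hirr htrans in
lemma skyInv_go : ∀ (l : List τ) (P : List τ) (S : List (τ × Bool)) (k : ℕ),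
    SkyInv r P S → SkyInv r (P ++ l) (obliFetchGo r mask l S k) := by
  intro l
  induction l with
  | nil => intro P S k h; simpa [obliFetchGo] using h
  | cons t rest ih =>
    intro P S k h
    have hstep := skyInv_step (mask := mask) hirr htrans P S t k h
    show SkyInv r (P ++ t :: rest) (obliFetchGo r mask (t :: rest) S k)
    rw [show P ++ t :: rest = (P ++ [t]) ++ rest by simp]
    rw [obliFetchGo]
    by_cases hdisc : (obliScan r mask t S k false).2.1 = true
    · rw [if_pos hdisc] at hstep ⊢
      exact ih _ _ _ hstep
    · rw [if_neg hdisc] at hstep ⊢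
      exact ih _ _ _ hstep

include hirr htrans in
lemma obliFetch_correct (l : List τ) (x : τ) :
    (x, false) ∈ obliFetch r mask l ↔ (x ∈ l ∧ ∀ y ∈ l, ¬ r y x) := by
  cases l with
  | nil => simp [obliFetch]
  | cons t rest =>
    have hbase : SkyInv r [t] [(t, false)] := by
      refine ⟨?_, ?_, ?_, ?_⟩
      · intro p hp; rw [List.mem_singleton.mp hp]; exact List.mem_singleton_self t
      · intro x hx _; rw [List.mem_singleton.mp hx]; exact List.mem_singleton_self _
      · intro x hx y hy
        rw [List.mem_singleton.mp hy]
        have : x = t := congrArg Prod.fst (List.mem_singleton.mp hx)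
        rw [this]; exact hirr t
      · intro y hy
        exact ⟨(t, false), List.mem_singleton_self _, Or.inl (List.mem_singleton.mp hy).symm⟩
    have hinv := skyInv_go (mask := mask) hirr htrans rest [t] [(t, false)] 0 hbase
    obtain ⟨ha, hb, hc, _⟩ := hinv
    show (x, false) ∈ obliFetchGo r mask rest [(t, false)] 0 ↔ _
    constructor
    · intro hx
      refine ⟨by simpa using ha _ hx, ?_⟩
      intro y hy
      exact hc x hx y (by simpa using hy)
    · intro ⟨hx1, hx2⟩
      exact hb x (by simpa using hx1) (fun y hy => hx2 y (by simpa using hy))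

end Loop

lemma dominates_irrefl (m : ℕ) (B : Finset (Fin m)) (pref : Fin m → Bool) :
    ∀ a, ¬ Dominates m B pref a a := by
  rintro a ⟨_, j, _, hj⟩
  exact hj rfl

lemma dominates_trans (m : ℕ) (B : Finset (Fin m)) (pref : Fin m → Bool) :
    ∀ a b c, Dominates m B pref a b → Dominates m B pref b c →
      Dominates m B pref a c := by
  rintro a b c ⟨h1, _⟩ ⟨h2, j, hjB, hj⟩
  refine ⟨?_, j, hjB, ?_⟩
  · intro i hi
    refine ⟨fun hp => le_trans ((h1 i hi).1 hp) ((h2 i hi).1 hp),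
      fun hp => le_trans ((h2 i hi).2 hp) ((h1 i hi).2 hp)⟩
  · intro hac
    have g1 := h1 j hjB
    have g2 := h2 j hjB
    cases hp : pref j with
    | false =>
      have := g1.1 hp; have := g2.1 hp; omega
    | true =>
      have := g1.2 hp; have := g2.2 hp; omega


/-- End-to-end correctness of the ObliuSky pipeline: shuffling the database
(`T'` is any permutation of `T`), filtering by the extended constrained region
`R'` (where non-selected dimensions carry public bounds satisfied by every
tuple of `T`), running the randomized skyline fetch with respect to the
user-defined dominance `≺_B` for any choice of the masking bits, and keeping
the tuples flagged `isDomi = 0`, returns exactly the user-defined skyline query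
result `{p ∈ C : ¬∃ p' ∈ C, p' ≺_B p}` where
`C = {t ∈ T : r_{j,l} ≤ t[j] ≤ r_{j,u} for all j ∈ B}`. -/
theorem obliuSky_end_to_end_correct (m : ℕ) (T T' : List (Fin m → ℤ))
    (hperm : T'.Perm T) (B : Finset (Fin m)) (pref : Fin m → Bool)
    (rl ru L U : Fin m → ℤ)
    (hLU : ∀ t ∈ T, ∀ i, i ∉ B → L i ≤ t i ∧ t i ≤ U i)
    (rl' ru' : Fin m → ℤ)
    (hrl' : ∀ i, rl' i = if i ∈ B then rl i else L i)
    (hru' : ∀ i, ru' i = if i ∈ B then ru i else U i)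
    (mask : ℕ → Bool)
    (Ctilde : List (Fin m → ℤ))
    (hCtilde : Ctilde = T'.filter fun t => decide (∀ i, rl' i ≤ t i ∧ t i ≤ ru' i))
    (S : List ((Fin m → ℤ) × Bool))
    (hS : S = obliFetch (Dominates m B pref) mask Ctilde) :
    ∀ x, (x, false) ∈ S ↔
      ((x ∈ T ∧ ∀ j ∈ B, rl j ≤ x j ∧ x j ≤ ru j) ∧
        ¬ ∃ p', (p' ∈ T ∧ ∀ j ∈ B, rl j ≤ p' j ∧ p' j ≤ ru j) ∧
          Dominates m B pref p' x) := by
  intro x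
  have hmemC : ∀ z : Fin m → ℤ,
      z ∈ Ctilde ↔ (z ∈ T ∧ ∀ j ∈ B, rl j ≤ z j ∧ z j ≤ ru j) := by
    intro z
    rw [hCtilde, List.mem_filter]
    simp only [decide_eq_true_eq]
    constructor
    · rintro ⟨hz, hcon⟩
      refine ⟨hperm.mem_iff.mp hz, fun j hj => ?_⟩
      have := hcon j
      rwa [hrl' j, hru' j, if_pos hj, if_pos hj] at this
    · rintro ⟨hz, hcon⟩
      refine ⟨hperm.mem_iff.mpr hz, fun i => ?_⟩
      rw [hrl' i, hru' i]
      by_cases hi : i ∈ B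
      · rw [if_pos hi, if_pos hi]; exact hcon i hi
      · rw [if_neg hi, if_neg hi]; exact hLU z hz i hi
  rw [hS, obliFetch_correct (dominates_irrefl m B pref) (dominates_trans m B pref)]
  rw [hmemC]
  constructor
  · rintro ⟨h1, h2⟩
    refine ⟨h1, ?_⟩
    rintro ⟨p', hp1, hp2⟩
    exact h2 p' ((hmemC p').mpr hp1) hp2
  · rintro ⟨h1, h2⟩
    refine ⟨h1, fun y hy hd => h2 ⟨y, (hmemC y).mp hy, hd⟩⟩
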